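/- arXiv:2105.10743 — 3 statements merged into one kernel-verified Lean document; each statement's English description precedes it below -/
import Mathlib

section
/- In a random game G(2,n) with n ≥ 1, for every k ∈ {1,…,n}, the probability that Column has exactly k strictly undominated actions equals s(n,k)/n!, where s(n,k) is the unsigned Stirling number of the first kind. -/
open Finset Filter

noncomputable section

/-- Row action `i` is strictly dominated in the restricted game with Row actions `X`
and Column actions `Y`, for Row payoff matrix `R`. -/
def RowDomIn {m n : ℕ} (R : Fin m → Fin n → ℝ) (X : Finset (Fin m)) (Y : Finset (Fin n))
    (i : Fin m) : Prop :=
  ∃ i' ∈ X, ∀ j ∈ Y, R i j < R i' j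

/-- Column action `j` is strictly dominated in the restricted game with Row actions `X`
and Column actions `Y`, for Column payoff matrix `C`. -/
def ColDomIn {m n : ℕ} (C : Fin m → Fin n → ℝ) (X : Finset (Fin m)) (Y : Finset (Fin n))
    (j : Fin n) : Prop :=
  ∃ j' ∈ Y, ∀ i ∈ X, C i j < C i j'

open Classical in
/-- One round of iterated elimination: simultaneously delete every strictly dominated
action of both players in the current restricted game. -/
def elimStep {m n : ℕ} (R C : Fin m → Fin n → ℝ)
    (p : Finset (Fin m) × Finset (Fin n)) : Finset (Fin m) × Finset (Fin n) :=
  (p.1.filter fun i => ¬ RowDomIn R p.1 p.2 i,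
   p.2.filter fun j => ¬ ColDomIn C p.1 p.2 j)

/-- Surviving actions of the subgame `(p.1, p.2)` after iterated elimination of strictly
dominated actions (iterating `m + n` times surely reaches the fixed point). -/
def survivorsFrom {m n : ℕ} (R C : Fin m → Fin n → ℝ)
    (p : Finset (Fin m) × Finset (Fin n)) : Finset (Fin m) × Finset (Fin n) :=
  (elimStep R C)^[m + n] p

/-- The subgame `(p.1, p.2)` is strict-dominance solvable: exactly one action of each
player survives iterated elimination of strictly dominated actions. -/
def SolvableFrom {m n : ℕ} (R C : Fin m → Fin n → ℝ)
    (p : Finset (Fin m) × Finset (Fin n)) : Prop :=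
  (survivorsFrom R C p).1.card = 1 ∧ (survivorsFrom R C p).2.card = 1

/-- Surviving actions of the full game after iterated elimination. -/
def survivors {m n : ℕ} (R C : Fin m → Fin n → ℝ) : Finset (Fin m) × Finset (Fin n) :=
  survivorsFrom R C (Finset.univ, Finset.univ)

/-- The game is strict-dominance solvable. -/
def Solvable {m n : ℕ} (R C : Fin m → Fin n → ℝ) : Prop :=
  SolvableFrom R C (Finset.univ, Finset.univ)

/-- The number of rounds performed by the iterated elimination procedure:
the least `k` such that round `k + 1` deletes nothing more. -/
def elimRounds {m n : ℕ} (R C : Fin m → Fin n → ℝ) : ℕ :=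
  sInf {k | (elimStep R C)^[k + 1] (Finset.univ, Finset.univ)
          = (elimStep R C)^[k] (Finset.univ, Finset.univ)}

/-- Sample space of the random game `G(m,n)`: for each Column action an i.i.d. uniform
permutation giving Row's ordinal payoffs in that column, and for each Row action an
i.i.d. uniform permutation giving Column's ordinal payoffs in that row. -/
abbrev Omega (m n : ℕ) := (Fin n → Equiv.Perm (Fin m)) × (Fin m → Equiv.Perm (Fin n))

/-- Row's payoff matrix of the realized game. -/
def RPay {m n : ℕ} (ω : Omega m n) : Fin m → Fin n → ℝ := fun i j => ((ω.1 j) i : ℕ)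

/-- Column's payoff matrix of the realized game. -/
def CPay {m n : ℕ} (ω : Omega m n) : Fin m → Fin n → ℝ := fun i j => ((ω.2 i) j : ℕ)

/-- Probability of an event under the uniform distribution on `Omega m n`
(i.e. all `m + n` permutations uniform and mutually independent). -/
def Pr {m n : ℕ} (E : Set (Omega m n)) : ℝ :=
  (E.toFinite.toFinset.card : ℝ) / (Fintype.card (Omega m n) : ℝ)

open Classical in
/-- Number of Row actions that are not strictly dominated. -/
def UR {m n : ℕ} (ω : Omega m n) : ℕ :=
  (Finset.univ.filter fun i => ¬ RowDomIn (RPay ω) Finset.univ Finset.univ i).card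

open Classical in
/-- Number of Column actions that are not strictly dominated. -/
def UC {m n : ℕ} (ω : Omega m n) : ℕ :=
  (Finset.univ.filter fun j => ¬ ColDomIn (CPay ω) Finset.univ Finset.univ j).card

/-- Number of Row actions surviving iterated elimination. -/
def SR {m n : ℕ} (ω : Omega m n) : ℕ := (survivors (RPay ω) (CPay ω)).1.card

/-- Number of Column actions surviving iterated elimination. -/
def SC {m n : ℕ} (ω : Omega m n) : ℕ := (survivors (RPay ω) (CPay ω)).2.card

/-- The realized game is strict-dominance solvable. -/
def GameSolvable {m n : ℕ} (ω : Omega m n) : Prop := Solvable (RPay ω) (CPay ω)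

/-- Number of rounds of the iterated elimination procedure in the realized game. -/
def GameRounds {m n : ℕ} (ω : Omega m n) : ℕ := elimRounds (RPay ω) (CPay ω)

/-- `π(m,n)`: probability that the random game `G(m,n)` is strict-dominance solvable. -/
def probSolvable (m n : ℕ) : ℝ := Pr {ω : Omega m n | GameSolvable ω}

/-- Expected number of Column's strictly undominated actions, `E[U^C(m,n)]`. -/
def expUC (m n : ℕ) : ℝ :=
  (∑ ω : Omega m n, (UC ω : ℝ)) / (Fintype.card (Omega m n) : ℝ)

/-- Expected number of Column actions surviving iterated elimination, `E[S^C(m,n)]`. -/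
def expSC (m n : ℕ) : ℝ :=
  (∑ ω : Omega m n, (SC ω : ℝ)) / (Fintype.card (Omega m n) : ℝ)

open Classical in
/-- `E[I(m,n)]`: expected number of elimination rounds conditional on the game being
strict-dominance solvable. -/
def condExpRounds (m n : ℕ) : ℝ :=
  (∑ ω : Omega m n, if GameSolvable ω then (GameRounds ω : ℝ) else 0) /
    (∑ ω : Omega m n, if GameSolvable ω then (1 : ℝ) else 0)

/-- Unsigned Stirling numbers of the first kind. -/
def stirling1 : ℕ → ℕ → ℕ
  | 0, 0 => 1
  | 0, _ + 1 => 0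
  | _ + 1, 0 => 0
  | n + 1, k + 1 => n * stirling1 n (k + 1) + stirling1 n k

end

/-!
With two Row actions, Column's payoffs are two permutations `σ, τ` of her actions, and action
`j` is undominated iff no `j'` beats it in both rows. Reading the actions in the order of `σ`,
this says that `σ j` is a right-to-left maximum of `ρ = τ σ⁻¹`. Since `ρ` is uniform, it remains
to count permutations of `Fin n` by right-to-left maxima. Inserting a new minimal value at
position `p` creates a new maximum exactly when `p` is last, which gives the Stirling recurrence
`s(n+1,k) = n s(n,k) + s(n,k-1)`.
-/

namespace Equiv.Perm

variable {n : ℕ}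

def rightToLeftMaxima (ρ : Perm (Fin n)) : Finset (Fin n) :=
  {p | ∀ q, p < q → ρ q < ρ p}

lemma mem_rightToLeftMaxima {ρ : Perm (Fin n)} {p : Fin n} :
    p ∈ ρ.rightToLeftMaxima ↔ ∀ q, p < q → ρ q < ρ p := by
  simp [rightToLeftMaxima]

lemma not_exists_lt_lt_iff_mem_rightToLeftMaxima (σ τ : Perm (Fin n)) (j : Fin n) :
    (¬ ∃ j', σ j < σ j' ∧ τ j < τ j') ↔ σ j ∈ (τ * σ⁻¹).rightToLeftMaxima := by
  rw [mem_rightToLeftMaxima, ← σ.forall_congr_right]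
  simp only [not_exists, not_and, not_lt, coe_mul, coe_inv, Function.comp_apply,
    symm_apply_apply]
  refine forall_congr' fun j' => imp_congr_right fun h => Ne.le_iff_lt ?_
  exact τ.injective.ne (by rintro rfl; exact lt_irrefl _ h)

/-- The permutation of `Fin (n + 1)` sending `p` to `0` and acting as `ρ` on the other
positions and the nonzero values. -/
def insertMin (p : Fin (n + 1)) (ρ : Perm (Fin n)) : Perm (Fin (n + 1)) :=
  (finSuccEquiv' p).trans (ρ.optionCongr.trans (finSuccEquiv n).symm)

@[simp]
lemma insertMin_self (p : Fin (n + 1)) (ρ : Perm (Fin n)) : insertMin p ρ p = 0 := by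
  simp [insertMin]

@[simp]
lemma insertMin_succAbove (p : Fin (n + 1)) (ρ : Perm (Fin n)) (q : Fin n) :
    insertMin p ρ (p.succAbove q) = (ρ q).succ := by
  simp [insertMin]

lemma self_mem_rightToLeftMaxima_insertMin (p : Fin (n + 1)) (ρ : Perm (Fin n)) :
    p ∈ (insertMin p ρ).rightToLeftMaxima ↔ p = Fin.last n := by
  rw [mem_rightToLeftMaxima, insertMin_self]
  refine ⟨fun h => ?_, fun h q hq => absurd hq (by simp [h, Fin.le_last])⟩
  by_contra hp
  exact Fin.not_lt_zero _ (h _ (Fin.lt_last_iff_ne_last.mpr hp))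

lemma succAbove_mem_rightToLeftMaxima_insertMin (p : Fin (n + 1)) (ρ : Perm (Fin n))
    (q : Fin n) :
    p.succAbove q ∈ (insertMin p ρ).rightToLeftMaxima ↔ q ∈ ρ.rightToLeftMaxima := by
  rw [mem_rightToLeftMaxima, mem_rightToLeftMaxima, p.forall_iff_succAbove]
  simp [Fin.succ_pos, Fin.succAbove_lt_succAbove_iff]

lemma card_rightToLeftMaxima_insertMin (p : Fin (n + 1)) (ρ : Perm (Fin n)) :
    #(insertMin p ρ).rightToLeftMaxima =
      #ρ.rightToLeftMaxima + if p = Fin.last n then 1 else 0 := by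
  have card_eq_sum {m : ℕ} (s : Finset (Fin m)) : #s = ∑ x, if x ∈ s then 1 else 0 := by
    simp
  rw [card_eq_sum, card_eq_sum, Fin.sum_univ_succAbove _ p]
  simp only [self_mem_rightToLeftMaxima_insertMin, succAbove_mem_rightToLeftMaxima_insertMin]
  ring

lemma insertMin_injective :
    Function.Injective fun x : Fin (n + 1) × Perm (Fin n) => insertMin x.1 x.2 := by
  rintro ⟨p, ρ⟩ ⟨p', ρ'⟩ h
  simp only at h
  obtain rfl : p = p' :=
    (insertMin p' ρ').injective (by rw [← congr($h p), insertMin_self, insertMin_self])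
  refine Prod.ext rfl (Equiv.ext fun q => Fin.succ_injective _ ?_)
  simpa using congr($h (p.succAbove q))

noncomputable def insertMinEquiv (n : ℕ) : Fin (n + 1) × Perm (Fin n) ≃ Perm (Fin (n + 1)) :=
  .ofBijective _ <| (Fintype.bijective_iff_injective_and_card _).mpr
    ⟨insertMin_injective, by simp [Fintype.card_perm, Nat.factorial_succ]⟩

lemma card_filter_card_rightToLeftMaxima_succ (n k : ℕ) :
    #{π : Perm (Fin (n + 1)) | #π.rightToLeftMaxima = k} =
      n * #{ρ : Perm (Fin n) | #ρ.rightToLeftMaxima = k} +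
        #{ρ : Perm (Fin n) | #ρ.rightToLeftMaxima + 1 = k} := by
  rw [card_filter, ← (insertMinEquiv n).sum_comp, Fintype.sum_prod_type,
    Fin.sum_univ_castSucc]
  simp only [insertMinEquiv, Equiv.ofBijective_apply, card_rightToLeftMaxima_insertMin]
  simp [Fin.castSucc_ne_last, sum_boole]

theorem card_filter_card_rightToLeftMaxima_eq_stirling1 (n k : ℕ) :
    #{ρ : Perm (Fin n) | #ρ.rightToLeftMaxima = k} = stirling1 n k := by
  induction n generalizing k with
  | zero => cases k <;> simp [stirling1, rightToLeftMaxima]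
  | succ n ih =>
    rw [card_filter_card_rightToLeftMaxima_succ]
    cases k with
    | zero => rw [ih]; cases n <;> simp [stirling1]
    | succ k => simp [ih, stirling1]

end Equiv.Perm

lemma card_filter_snd_comp_equiv {α β γ : Type*} [Fintype α] [Fintype β] [Fintype γ]
    (e : α ≃ β × γ) (P : γ → Prop) [DecidablePred P] :
    #{a | P (e a).2} = Fintype.card β * #{c | P c} := by
  rw [card_equiv e (t := (univ : Finset β) ×ˢ ({c | P c} : Finset γ)) (by simp), card_product,
    card_univ]

lemma colDomIn_univ_univ_iff {n : ℕ} (ω : Omega 2 n) (j : Fin n) :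
    ColDomIn (CPay ω) univ univ j ↔ ∃ j', ω.2 0 j < ω.2 0 j' ∧ ω.2 1 j < ω.2 1 j' := by
  simp [ColDomIn, CPay, Fin.forall_fin_two]

lemma UC_eq_card_rightToLeftMaxima {n : ℕ} (ω : Omega 2 n) :
    UC ω = #(ω.2 1 * (ω.2 0)⁻¹).rightToLeftMaxima := by
  classical
  exact card_equiv (ω.2 0) fun j => by
    rw [mem_filter, colDomIn_univ_univ_iff,
      Equiv.Perm.not_exists_lt_lt_iff_mem_rightToLeftMaxima]
    simp

def omegaTwoEquiv (n : ℕ) :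
    Omega 2 n ≃ ((Fin n → Equiv.Perm (Fin 2)) × Equiv.Perm (Fin n)) × Equiv.Perm (Fin n) :=
  ((Equiv.refl _).prodCongr ((finTwoArrowEquiv _).trans
    (Equiv.prodShear (.refl _) fun σ => Equiv.mulRight σ⁻¹))).trans (Equiv.prodAssoc _ _ _).symm

lemma omegaTwoEquiv_snd {n : ℕ} (ω : Omega 2 n) : (omegaTwoEquiv n ω).2 = ω.2 1 * (ω.2 0)⁻¹ :=
  rfl

lemma pr_UC_eq_div_factorial (n k : ℕ) :
    Pr {ω : Omega 2 n | UC ω = k} =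
      (#{ρ : Equiv.Perm (Fin n) | #ρ.rightToLeftMaxima = k} : ℝ) / n.factorial := by
  let β := (Fin n → Equiv.Perm (Fin 2)) × Equiv.Perm (Fin n)
  have hcard : Fintype.card (Omega 2 n) = Fintype.card β * n.factorial := by
    rw [Fintype.card_congr (omegaTwoEquiv n), Fintype.card_prod, Fintype.card_perm,
      Fintype.card_fin]
  have hevent : #{ω : Omega 2 n | UC ω = k} =
      Fintype.card β * #{ρ : Equiv.Perm (Fin n) | #ρ.rightToLeftMaxima = k} := by
    simp only [UC_eq_card_rightToLeftMaxima, ← omegaTwoEquiv_snd]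
    exact card_filter_snd_comp_equiv (omegaTwoEquiv n) fun ρ => #ρ.rightToLeftMaxima = k
  have hβ : (Fintype.card β : ℝ) ≠ 0 := by positivity
  rw [Pr, Set.Finite.toFinset_ofPred, hevent, hcard]
  push_cast
  rw [mul_div_mul_left _ _ hβ]

theorem stmt1_general (n : ℕ) (k : ℕ) :
    Pr {ω : Omega 2 n | UC ω = k} = (stirling1 n k : ℝ) / (Nat.factorial n : ℝ) := by
  rw [pr_UC_eq_div_factorial, Equiv.Perm.card_filter_card_rightToLeftMaxima_eq_stirling1]

/-- In a random game `G(2,n)` with `n ≥ 1`, for every `k ∈ {1,…,n}`, the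
probability that Column has exactly `k` strictly undominated actions equals `s(n,k)/n!`. -/
theorem stmt1 (n : ℕ) (hn : 1 ≤ n) (k : ℕ) (hk : k ∈ Finset.Icc 1 n) :
    Pr {ω : Omega 2 n | UC ω = k} = (stirling1 n k : ℝ) / (Nat.factorial n : ℝ) :=
  stmt1_general n k
end

section
/- lim_{n→∞} n^{1/2} · π(2,n) = 2/√π, where π(2,n) is the probability that a random game G(2,n) is strict-dominance solvable. -/
open Finset Filter

/-!
In a `2 × n` game Row's payoffs in a column just say which row wins it, and Column's undominated
actions `F` are the Pareto-maximal columns for the two rankings `c₀, c₁`. The first round removes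
exactly Column's dominated actions and no more columns go while both rows survive, so the game is
solvable iff one row loses every column of `F`: given Column's payoffs this has probability
`2 / 2 ^ |F|`. The columns outside `F` correspond to the positions of `c₁ ∘ c₀⁻¹` that are not
right-to-left maxima; prepending an entry to a permutation shows that `2` to the number of such
positions sums over `Perm (Fin n)` to `∏_{k < n} (2k + 1) = (2n)! / (2ⁿ n!)`. Hence
`π(2,n) = 2 * C(2n,n) / 4ⁿ`, and Stirling's formula gives the limit.
-/

open Equiv Function Nat

def nonRightMaxima {n : ℕ} (τ : Perm (Fin n)) : Finset (Fin n) :=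
  {k | ∃ k', k < k' ∧ τ k < τ k'}

lemma mem_nonRightMaxima {n : ℕ} {τ : Perm (Fin n)} {k : Fin n} :
    k ∈ nonRightMaxima τ ↔ ∃ k', k < k' ∧ τ k < τ k' := by
  simp [nonRightMaxima]

noncomputable def consPerm {n : ℕ} (p : Fin (n + 1)) (σ : Perm (Fin n)) : Perm (Fin (n + 1)) :=
  Equiv.ofBijective (Fin.cons p (p.succAbove ∘ σ)) <| Finite.injective_iff_bijective.mp <|
    Fin.cons_injective_iff.mpr
      ⟨by simp, Fin.succAbove_right_injective.comp σ.injective⟩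

@[simp] lemma consPerm_zero {n : ℕ} (p : Fin (n + 1)) (σ : Perm (Fin n)) :
    consPerm p σ 0 = p := rfl

@[simp] lemma consPerm_succ {n : ℕ} (p : Fin (n + 1)) (σ : Perm (Fin n)) (i : Fin n) :
    consPerm p σ i.succ = p.succAbove (σ i) := rfl

lemma consPerm_bijective (n : ℕ) :
    Bijective fun x : Fin (n + 1) × Perm (Fin n) => consPerm x.1 x.2 := by
  rw [Fintype.bijective_iff_injective_and_card]
  refine ⟨fun ⟨p, σ⟩ ⟨q, ρ⟩ h => ?_, by simp [Fintype.card_perm, Nat.factorial_succ]⟩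
  have hpq : p = q := by simpa using DFunLike.congr_fun h 0
  subst hpq
  refine Prod.ext rfl (Equiv.ext fun i => ?_)
  simpa using DFunLike.congr_fun h i.succ

lemma zero_mem_nonRightMaxima_consPerm {n : ℕ} (p : Fin (n + 1)) (σ : Perm (Fin n)) :
    0 ∈ nonRightMaxima (consPerm p σ) ↔ p ≠ Fin.last n := by
  simp only [mem_nonRightMaxima, Fin.exists_fin_succ, lt_irrefl, false_and, false_or,
    Fin.succ_pos, true_and, consPerm_zero, consPerm_succ]
  refine (σ.surjective.exists (p := fun j => p < p.succAbove j)).symm.trans ?_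
  simp only [Fin.lt_succAbove_iff_le_castSucc]
  constructor
  · rintro ⟨j, hj⟩ rfl
    exact absurd (hj.trans_lt (Fin.castSucc_lt_last j)) (lt_irrefl _)
  · intro hp
    obtain ⟨j, rfl⟩ := Fin.exists_castSucc_eq.mpr hp
    exact ⟨j, le_rfl⟩

lemma succ_mem_nonRightMaxima_consPerm {n : ℕ} (p : Fin (n + 1)) (σ : Perm (Fin n)) (i : Fin n) :
    i.succ ∈ nonRightMaxima (consPerm p σ) ↔ i ∈ nonRightMaxima σ := by
  simp [mem_nonRightMaxima, Fin.exists_fin_succ, Fin.succAbove_lt_succAbove_iff]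

lemma card_nonRightMaxima_consPerm {n : ℕ} (p : Fin (n + 1)) (σ : Perm (Fin n)) :
    #(nonRightMaxima (consPerm p σ)) = #(nonRightMaxima σ) + if p = Fin.last n then 0 else 1 := by
  classical
  simp only [nonRightMaxima]
  rw [Fin.card_filter_univ_succ']
  simp only [← mem_nonRightMaxima, zero_mem_nonRightMaxima_consPerm,
    succ_mem_nonRightMaxima_consPerm, filter_mem_eq_inter, univ_inter]
  split_ifs <;> omega

theorem sum_pow_card_nonRightMaxima {R : Type*} [CommSemiring R] (x : R) (n : ℕ) :
    ∑ τ : Perm (Fin n), x ^ #(nonRightMaxima τ) = ∏ k ∈ range n, (1 + k * x) := by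
  induction n with
  | zero => simp [nonRightMaxima]
  | succ n ih =>
    rw [← Fintype.sum_bijective _ (consPerm_bijective n) _ _ fun _ => rfl, Fintype.sum_prod_type,
      prod_range_succ, ← ih]
    simp only [card_nonRightMaxima_consPerm, pow_add, ← Finset.mul_sum, ← Finset.sum_mul]
    congr 1
    simp [Fin.sum_univ_castSucc, Fin.castSucc_ne_last, add_comm]

lemma prod_range_one_add_mul_two_mul_two_pow_mul_factorial (n : ℕ) :
    (∏ k ∈ range n, (1 + k * 2)) * (2 ^ n * n !) = (2 * n)! := by
  induction n with
  | zero => simp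
  | succ n ih =>
    rw [show 2 * (n + 1) = 2 * n + 1 + 1 by ring, factorial_succ (2 * n + 1),
      factorial_succ (2 * n), ← ih, prod_range_succ, pow_succ, factorial_succ]
    ring

lemma centralBinom_mul_factorial_mul_factorial (n : ℕ) :
    centralBinom n * (n ! * n !) = (2 * n)! := by
  rw [centralBinom_eq_two_mul_choose, ← mul_assoc]
  simpa [two_mul] using choose_mul_factorial_mul_factorial (Nat.le_add_left n n)

section Dominance

variable {m n : ℕ} {R C : Fin m → Fin n → ℝ}

lemma RowDomIn.anti {X : Finset (Fin m)} {Y Y' : Finset (Fin n)} {i : Fin m}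
    (h : RowDomIn R X Y i) (hY : Y' ⊆ Y) : RowDomIn R X Y' i :=
  let ⟨i', hi', hlt⟩ := h
  ⟨i', hi', fun j hj => hlt j (hY hj)⟩

lemma ColDomIn.mono {X : Finset (Fin m)} {Y Y' : Finset (Fin n)} {j : Fin n}
    (h : ColDomIn C X Y j) (hY : Y ⊆ Y') : ColDomIn C X Y' j :=
  let ⟨j', hj', hlt⟩ := h
  ⟨j', hY hj', hlt⟩

lemma survivorsFrom_eq_of_iterate_eq {p q : Finset (Fin m) × Finset (Fin n)} {k : ℕ}
    (hk : k ≤ m + n) (hpq : (elimStep R C)^[k] p = q) (hq : elimStep R C q = q) :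
    survivorsFrom R C p = q := by
  rw [survivorsFrom, ← Nat.sub_add_cancel hk, iterate_add_apply, hpq, iterate_fixed hq]

lemma elimStep_singleton_singleton (i : Fin m) (j : Fin n) :
    elimStep R C ({i}, {j}) = ({i}, {j}) := by
  simp [elimStep, RowDomIn, ColDomIn]

lemma exists_elimStep_singleton_left {i : Fin m} {Y : Finset (Fin n)} (hY : Y.Nonempty)
    (hC : Injective (C i)) : ∃ j₀ ∈ Y, elimStep R C ({i}, Y) = ({i}, {j₀}) := by
  classical
  obtain ⟨j₀, hj₀, hmax⟩ := Y.exists_max_image (C i) hY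
  refine ⟨j₀, hj₀, Prod.ext ?_ ?_⟩
  · obtain ⟨j, hj⟩ := hY
    simpa [elimStep, RowDomIn] using ⟨j, hj⟩
  · ext j
    simp only [elimStep, ColDomIn, mem_filter, mem_singleton, forall_eq, not_exists, not_and,
      not_lt]
    refine ⟨fun ⟨hj, hle⟩ => hC ((hmax j hj).antisymm (hle j₀ hj₀)), ?_⟩
    rintro rfl
    exact ⟨hj₀, hmax⟩

lemma solvableFrom_of_iterate_eq_singleton_left {p : Finset (Fin m) × Finset (Fin n)} {k : ℕ}
    {i : Fin m} {Y : Finset (Fin n)} (hk : k + 1 ≤ m + n) (hp : (elimStep R C)^[k] p = ({i}, Y))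
    (hY : Y.Nonempty) (hC : Injective (C i)) : SolvableFrom R C p := by
  obtain ⟨j₀, -, hstep⟩ := exists_elimStep_singleton_left (R := R) hY hC
  have := survivorsFrom_eq_of_iterate_eq hk (by rw [iterate_succ_apply', hp, hstep])
    (elimStep_singleton_singleton i j₀)
  simp [SolvableFrom, this]

open Classical in
noncomputable def undominatedCols (C : Fin m → Fin n → ℝ) : Finset (Fin n) :=
  {j | ¬ ColDomIn C univ univ j}

lemma undominatedCols_nonempty [NeZero m] [NeZero n] (C : Fin m → Fin n → ℝ) :
    (undominatedCols C).Nonempty := by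
  obtain ⟨j₀, -, hmax⟩ := univ.exists_max_image (C 0) univ_nonempty
  refine ⟨j₀, ?_⟩
  simp only [undominatedCols, mem_filter, mem_univ, true_and]
  rintro ⟨j', -, hlt⟩
  exact (hlt 0 (mem_univ 0)).not_ge (hmax j' (mem_univ j'))

open Classical in
lemma elimStep_univ_undominatedCols_snd :
    (elimStep R C (univ, undominatedCols C)).2 = undominatedCols C := by
  refine filter_true_of_mem fun j hj hdom => ?_
  simp only [undominatedCols, mem_filter] at hj
  exact hj.2 (hdom.mono (subset_univ _))

end Dominance

section TwoRows

variable {n : ℕ} {R C : Fin 2 → Fin n → ℝ}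

lemma not_rowDomIn_of_rowDomIn {Y : Finset (Fin n)} {i i' : Fin 2} (hY : Y.Nonempty)
    (hi : RowDomIn R univ Y i) (hi' : i' ≠ i) : ¬ RowDomIn R univ Y i' := by
  rintro ⟨k', -, hk'⟩
  obtain ⟨k, -, hk⟩ := hi
  obtain ⟨j, hj⟩ := hY
  have hki : k ≠ i := fun h => (hk j hj).ne (by rw [h])
  have hk'i' : k' ≠ i' := fun h => (hk' j hj).ne (by rw [h])
  obtain rfl : k = i' := by omega
  obtain rfl : k' = i := by omega
  exact (hk j hj).asymm (hk' j hj)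

open Classical in
lemma filter_not_rowDomIn_eq_singleton {Y : Finset (Fin n)} {i i' : Fin 2} (hY : Y.Nonempty)
    (hi : RowDomIn R univ Y i) (hi' : i' ≠ i) :
    ({x | ¬ RowDomIn R univ Y x} : Finset (Fin 2)) = {i'} := by
  ext x
  simp only [mem_filter, mem_univ, true_and, mem_singleton]
  refine ⟨fun hx => ?_, fun hx => hx ▸ not_rowDomIn_of_rowDomIn hY hi hi'⟩
  have : x ≠ i := fun h => hx (h ▸ hi)
  omega

theorem solvable_iff_exists_rowDomIn [NeZero n] (hC : ∀ i, Injective (C i)) :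
    Solvable R C ↔ ∃ i, RowDomIn R univ (undominatedCols C) i := by
  classical
  set F := undominatedCols C
  have hF : F.Nonempty := undominatedCols_nonempty C
  have hstep : elimStep R C (univ, univ) =
      (({i | ¬ RowDomIn R univ univ i} : Finset (Fin 2)), F) := rfl
  have hcols : (elimStep R C (univ, F)).2 = F := elimStep_univ_undominatedCols_snd
  constructor
  · intro hsolv
    by_contra! hnone
    have hrows : ∀ Y, F ⊆ Y → ({i | ¬ RowDomIn R univ Y i} : Finset (Fin 2)) = univ :=
      fun Y hY => filter_true_of_mem fun i _ h => hnone i (h.anti hY)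
    have hsurv : survivorsFrom R C (univ, univ) = (univ, F) :=
      survivorsFrom_eq_of_iterate_eq (k := 1) (by omega) (by simp [hstep, hrows])
        (Prod.ext (hrows F le_rfl) hcols)
    simp [Solvable, SolvableFrom, hsurv] at hsolv
  · rintro ⟨i, hi⟩
    obtain ⟨i', hi'⟩ := exists_ne i
    have hn : 1 ≤ n := Nat.one_le_iff_ne_zero.mpr (NeZero.ne n)
    by_cases hdom : RowDomIn R univ univ i
    · refine solvableFrom_of_iterate_eq_singleton_left (k := 1) (by omega) ?_ hF (hC i')
      simp [hstep, filter_not_rowDomIn_eq_singleton univ_nonempty hdom hi']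
    · have hrows : ({x | ¬ RowDomIn R univ univ x} : Finset (Fin 2)) = univ := by
        refine filter_true_of_mem fun x _ hx => ?_
        obtain rfl | rfl : x = i ∨ x = i' := by omega
        · exact hdom hx
        · exact not_rowDomIn_of_rowDomIn hF hi hi' (hx.anti (subset_univ F))
      refine solvableFrom_of_iterate_eq_singleton_left (k := 2) (by omega) ?_ hF (hC i')
      rw [iterate_succ_apply', iterate_one, hstep, hrows]
      exact Prod.ext (filter_not_rowDomIn_eq_singleton hF hi hi') hcols

end TwoRows

lemma card_filter_forall_apply_eq_zero {ι : Type*} [Fintype ι] [DecidableEq ι] (s : Finset ι)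
    (i : Fin 2) : #{a : ι → Perm (Fin 2) | ∀ j ∈ s, a j i = 0} = 2 ^ #sᶜ := by
  have hfib : #{σ : Perm (Fin 2) | σ i = 0} = 1 := by revert i; decide
  have : ({a : ι → Perm (Fin 2) | ∀ j ∈ s, a j i = 0} : Finset _) =
      Fintype.piFinset fun j => if j ∈ s then ({σ | σ i = 0} : Finset (Perm (Fin 2)))
        else univ := by
    ext a
    simp only [mem_filter, mem_univ, true_and, Fintype.mem_piFinset]
    refine ⟨fun h j => ?_, fun h j hj => by simpa [hj] using h j⟩
    split_ifs with hj <;> simp [h, hj]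
  rw [this, Fintype.card_piFinset]
  simp [apply_ite card, hfib, prod_ite, Fintype.card_perm, filter_not, compl_eq_univ_sdiff]

lemma card_filter_exists_forall_apply_eq_zero {ι : Type*} [Fintype ι] [DecidableEq ι]
    {s : Finset ι} (hs : s.Nonempty) :
    #{a : ι → Perm (Fin 2) | ∃ i, ∀ j ∈ s, a j i = 0} = 2 * 2 ^ #sᶜ := by
  simp only [Fin.exists_fin_two, filter_or]
  rw [card_union_of_disjoint, card_filter_forall_apply_eq_zero, card_filter_forall_apply_eq_zero,
    two_mul]
  refine disjoint_filter.mpr fun a _ h₀ h₁ => ?_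
  obtain ⟨j, hj⟩ := hs
  exact zero_ne_one ((a j).injective ((h₀ j hj).trans (h₁ j hj).symm))

lemma sum_fin_two_mul_inv {G M : Type*} [Group G] [Fintype G] [AddCommMonoid M] (f : G → M) :
    ∑ b : Fin 2 → G, f (b 1 * (b 0)⁻¹) = Fintype.card G • ∑ g, f g := by
  rw [← (piFinTwoEquiv fun _ => G).symm.sum_comp, Fintype.sum_prod_type]
  simp only [piFinTwoEquiv_symm_apply, Fin.cons_zero, Fin.cons_one]
  rw [← Finset.card_univ, ← sum_const]
  exact sum_congr rfl fun x _ => Equiv.sum_comp (Equiv.mulRight x⁻¹) f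

section RandomGame

variable {n : ℕ}

lemma injective_cPay {m : ℕ} (ω : Omega m n) (i : Fin m) : Injective (CPay ω i) :=
  Nat.cast_injective.comp (Fin.val_injective.comp (ω.2 i).injective)

lemma rowDomIn_rPay_iff (ω : Omega 2 n) (Y : Finset (Fin n)) (i : Fin 2) :
    RowDomIn (RPay ω) univ Y i ↔ ∀ j ∈ Y, ω.1 j i = 0 := by
  simp only [RowDomIn, RPay, mem_univ, true_and, Nat.cast_lt, Fin.val_fin_lt]
  refine ⟨fun ⟨i', h⟩ j hj => ?_, fun h => ⟨i + 1, fun j hj => ?_⟩⟩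
  · have := h j hj
    omega
  · have : ω.1 j (i + 1) ≠ ω.1 j i := (ω.1 j).injective.ne (by omega)
    have := h j hj
    omega

lemma colDomIn_cPay_iff (ω : Omega 2 n) (j : Fin n) :
    ColDomIn (CPay ω) univ univ j ↔ ∃ j', ω.2 0 j < ω.2 0 j' ∧ ω.2 1 j < ω.2 1 j' := by
  simp [ColDomIn, CPay, Fin.forall_fin_two]

lemma card_compl_undominatedCols_cPay (ω : Omega 2 n) :
    #(undominatedCols (CPay ω))ᶜ = #(nonRightMaxima (ω.2 1 * (ω.2 0)⁻¹)) := by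
  classical
  refine card_equiv (ω.2 0) fun j => ?_
  simp only [undominatedCols, compl_filter, not_not, mem_filter, mem_univ, true_and,
    colDomIn_cPay_iff, mem_nonRightMaxima, Perm.mul_apply, Perm.inv_def, Equiv.symm_apply_apply]
  rw [(ω.2 0).exists_congr_left]
  simp




open Classical in
lemma card_filter_gameSolvable [NeZero n] :
    #{ω : Omega 2 n | GameSolvable ω} = 2 * (n ! * ∏ k ∈ range n, (1 + k * 2)) := by
  classical
  have hfiber (b : Fin 2 → Perm (Fin n)) :
      #{a : Fin n → Perm (Fin 2) | GameSolvable (a, b)} =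
        2 * 2 ^ #(nonRightMaxima (b 1 * (b 0)⁻¹)) := by
    -- Column's payoffs do not depend on Row's coins, so any choice of them determines `F`.
    let F := undominatedCols (CPay ((1 : Fin n → Perm (Fin 2)), b))
    have hsolv (a) : GameSolvable (a, b) ↔ ∃ i, ∀ j ∈ F, a j i = 0 := by
      rw [GameSolvable, solvable_iff_exists_rowDomIn (injective_cPay _)]
      simp only [rowDomIn_rPay_iff]
      rfl
    have hF : F.Nonempty := undominatedCols_nonempty _
    rw [← card_compl_undominatedCols_cPay (1, b), ← card_filter_exists_forall_apply_eq_zero hF]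
    congr 1
    ext a
    simp only [mem_filter, mem_univ, true_and, hsolv]
  rw [card_filter, Fintype.sum_prod_type, sum_comm]
  simp only [← card_filter, hfiber, ← mul_sum,
    sum_fin_two_mul_inv (fun τ => 2 ^ #(nonRightMaxima τ)), sum_pow_card_nonRightMaxima,
    Fintype.card_perm, Fintype.card_fin, smul_eq_mul, Nat.cast_id]

lemma probSolvable_two [NeZero n] : probSolvable 2 n = 2 * centralBinom n / 4 ^ n := by
  classical
  have hodd := congrArg (Nat.cast (R := ℝ)) <|
    (prod_range_one_add_mul_two_mul_two_pow_mul_factorial n).trans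
      (centralBinom_mul_factorial_mul_factorial n).symm
  rw [probSolvable, Pr, Set.toFinite_toFinset, Set.toFinset_ofPred, card_filter_gameSolvable]
  simp only [Fintype.card_prod, Fintype.card_fun, Fintype.card_perm, Fintype.card_fin,
    factorial_two]
  rw [div_eq_div_iff (by positivity) (by positivity), show (4 : ℝ) ^ n = 2 ^ n * 2 ^ n by
    rw [← mul_pow]; norm_num]
  push_cast at hodd ⊢
  linear_combination (2 * 2 ^ n : ℝ) * hodd

end RandomGame

section Asymptotics

open Real Stirling Topology

lemma sqrt_mul_centralBinom_div_four_pow {n : ℕ} (hn : n ≠ 0) :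
    √n * centralBinom n / 4 ^ n = stirlingSeq (2 * n) / stirlingSeq n ^ 2 := by
  have hn' : (0 : ℝ) < n := by positivity
  have hbinom := congrArg (Nat.cast (R := ℝ)) (centralBinom_mul_factorial_mul_factorial n)
  have hsqrt : √(2 * (2 * n : ℕ) : ℝ) = 2 * √n := by
    rw [show (2 * (2 * n : ℕ) : ℝ) = 2 ^ 2 * n by push_cast; ring, Real.sqrt_mul (by positivity),
      Real.sqrt_sq zero_le_two]
  have hpow : ((2 * n : ℕ) / exp 1 : ℝ) ^ (2 * n) = 4 ^ n * ((n / exp 1) ^ n) ^ 2 := by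
    rw [← pow_mul, mul_comm n 2, pow_mul, pow_mul, ← mul_pow]
    push_cast
    ring
  simp only [stirlingSeq, hsqrt, hpow]
  push_cast at hbinom ⊢
  field_simp
  rw [Real.sq_sqrt hn'.le, Real.sq_sqrt (by positivity)]
  linear_combination (2 * n : ℝ) * hbinom

theorem tendsto_sqrt_mul_centralBinom_div_four_pow :
    Tendsto (fun n : ℕ => √n * centralBinom n / 4 ^ n) atTop (𝓝 (1 / √π)) := by
  have hπ : √π ≠ 0 := by positivity
  have h := (tendsto_stirlingSeq_sqrt_pi.comp (tendsto_id.const_mul_atTop' two_pos)).div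
    (tendsto_stirlingSeq_sqrt_pi.pow 2) (pow_ne_zero 2 hπ)
  rw [sq, div_mul_cancel_left₀ hπ, inv_eq_one_div] at h
  exact h.congr' (eventually_atTop.mpr ⟨1, fun n hn =>
    (sqrt_mul_centralBinom_div_four_pow (by omega)).symm⟩)

end Asymptotics

/-- `lim_(n→∞) n^(1/2) · π(2,n) = 2/√π`. -/
theorem stmt4 :
    Filter.Tendsto (fun n : ℕ => Real.sqrt n * probSolvable 2 n)
      Filter.atTop (nhds (2 / Real.sqrt Real.pi)) := by
  have h := tendsto_sqrt_mul_centralBinom_div_four_pow.const_mul 2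
  rw [mul_one_div] at h
  refine h.congr' (eventually_atTop.mpr ⟨1, fun n hn => ?_⟩)
  have : NeZero n := ⟨by omega⟩
  show _ = √n * probSolvable 2 n
  rw [probSolvable_two]
  ring
end

section
/- For all m, n ≥ 2, the number of Column's strictly undominated actions U^C(m,n) first-order stochastically dominates U^C(m−1,n): for every k ∈ {1,…,n}, Pr(U^C(m,n) ≤ k) ≤ Pr(U^C(m−1,n) ≤ k), and the inequality is strict for k = 1, where Pr(U^C(m,n) ≤ 1) = n^{−(m−1)}. -/
open Finset Filter

/-!
`U^C` only depends on Column's payoffs. Deleting a Row can only make more Column actions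
dominated, so `ω ↦ (ω without its last row, the last row)` injects the games of `G(m, n)` with
`U^C ≤ k` into (games of `G(m - 1, n)` with `U^C ≤ k`) × (permutations of `Fin n`), which is the
stochastic dominance.

For `k = 1`: in every Row, the column giving Column its top payoff is undominated, and a column
that gives Column its top payoff in every Row strictly dominates all others. So `U^C ≤ 1` iff one column is on top in
every Row, which happens for `n · ((n - 1)!)^m` of the `(n!)^m` choices of Column's payoffs.
-/

open Equiv
open scoped Nat

section PermutationCounting

variable {α : Type*} [Fintype α] [DecidableEq α]

theorem card_filter_perm_apply_eq_congr (j a b : α) :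
    #{σ : Perm α | σ j = a} = #{σ : Perm α | σ j = b} :=
  card_bij' (fun σ _ => swap a b * σ) (fun σ _ => swap a b * σ)
    (by simp +contextual) (by simp +contextual) (by simp [← mul_assoc]) (by simp [← mul_assoc])

theorem card_filter_perm_apply_eq (j a : α) :
    #{σ : Perm α | σ j = a} = (Fintype.card α - 1)! := by
  have hfibers : Fintype.card (Perm α) = Fintype.card α * #{σ : Perm α | σ j = a} := by
    rw [← card_univ, card_eq_sum_card_fiberwise (f := fun σ : Perm α => σ j) (t := univ)
      (fun _ _ => mem_univ _), sum_congr rfl fun b _ => card_filter_perm_apply_eq_congr j b a,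
      sum_const, card_univ, smul_eq_mul]
  have hpos : 0 < Fintype.card α := Fintype.card_pos_iff.2 ⟨j⟩
  rw [Fintype.card_perm, ← Nat.mul_factorial_pred hpos.ne'] at hfibers
  exact (Nat.eq_of_mul_eq_mul_left hpos hfibers).symm

theorem card_filter_exists_forall_perm_apply_eq {ι : Type*} [Fintype ι] [DecidableEq ι]
    [Nonempty ι] (t : α) [DecidablePred fun τ : ι → Perm α => ∃ j, ∀ i, τ i j = t] :
    #{τ : ι → Perm α | ∃ j, ∀ i, τ i j = t} =
      Fintype.card α * ((Fintype.card α - 1)!) ^ Fintype.card ι := by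
  have hunion : ({τ : ι → Perm α | ∃ j, ∀ i, τ i j = t} : Finset _) =
      univ.biUnion fun j => Fintype.piFinset fun _ : ι => ({σ : Perm α | σ j = t} : Finset _) := by
    ext τ
    simp [Fintype.mem_piFinset]
  have hdisj : ((univ : Finset α) : Set α).PairwiseDisjoint
      fun j => Fintype.piFinset fun _ : ι => ({σ : Perm α | σ j = t} : Finset _) := by
    intro j _ j' _ hne
    refine disjoint_left.2 fun τ hj hj' => hne ?_
    obtain ⟨i⟩ := ‹Nonempty ι›
    simp only [Fintype.mem_piFinset, mem_filter, mem_univ, true_and] at hj hj'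
    exact (τ i).injective ((hj i).trans (hj' i).symm)
  simp [hunion, card_biUnion hdisj, Fintype.card_piFinset, card_filter_perm_apply_eq]

end PermutationCounting

theorem card_filter_le_card_filter_init_mul {β : Type*} [Fintype β] {M : ℕ}
    (p : (Fin (M + 1) → β) → Prop) (q : (Fin M → β) → Prop) [DecidablePred p] [DecidablePred q]
    (hpq : ∀ τ, p τ → q (Fin.init τ)) :
    #{τ | p τ} ≤ #{σ | q σ} * Fintype.card β := by
  rw [← card_univ (α := β), ← card_product]
  refine card_le_card_of_injOn (fun τ => (Fin.init τ, τ (Fin.last M))) ?_ ?_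
  · intro τ hτ
    simpa using hpq τ (by simpa using hτ)
  · intro τ _ τ' _ h
    obtain ⟨hinit, hlast⟩ := Prod.mk.inj h
    rw [← Fin.snoc_init_self τ, ← Fin.snoc_init_self τ', hinit, hlast]

def permPayoff {m n : ℕ} (τ : Fin m → Perm (Fin n)) : Fin m → Fin n → ℝ :=
  fun i j => (τ i j : ℕ)

open Classical in
noncomputable def numUndominatedCols {m n : ℕ} (τ : Fin m → Perm (Fin n)) : ℕ :=
  #{j | ¬ ColDomIn (permPayoff τ) univ univ j}

theorem UC_eq_numUndominatedCols {m n : ℕ} (ω : Omega m n) :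
    UC ω = numUndominatedCols ω.2 :=
  rfl

theorem Pr_setOf_snd {m n : ℕ} (p : (Fin m → Perm (Fin n)) → Prop) [DecidablePred p] :
    Pr {ω : Omega m n | p ω.2} = #{τ | p τ} / (Fintype.card (Perm (Fin n)) : ℝ) ^ m := by
  have hevent : {ω : Omega m n | p ω.2}.toFinite.toFinset = univ ×ˢ ({τ | p τ} : Finset _) := by
    ext ω
    simp
  have hfirst : (Fintype.card (Fin n → Perm (Fin m)) : ℝ) ≠ 0 := by
    exact_mod_cast Fintype.card_ne_zero
  rw [Pr, hevent, card_product, card_univ, Fintype.card_prod, Nat.cast_mul, Nat.cast_mul,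
    mul_div_mul_left _ _ hfirst, Fintype.card_fun, Fintype.card_fin, Nat.cast_pow]

theorem numUndominatedCols_init_le {M n : ℕ} (τ : Fin (M + 1) → Perm (Fin n)) :
    numUndominatedCols (Fin.init τ) ≤ numUndominatedCols τ := by
  refine card_le_card fun j => ?_
  simp only [mem_filter, mem_univ, true_and]
  rintro hj ⟨j', -, hdom⟩
  exact hj ⟨j', mem_univ _, fun i _ => hdom i.castSucc (mem_univ _)⟩

theorem Pr_UC_le_succ_rows_le (M n k : ℕ) :
    Pr {ω : Omega (M + 1) n | UC ω ≤ k} ≤ Pr {ω : Omega M n | UC ω ≤ k} := by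
  have hcount := card_filter_le_card_filter_init_mul (M := M) (β := Perm (Fin n))
    (fun τ => numUndominatedCols τ ≤ k) (fun σ => numUndominatedCols σ ≤ k)
    fun τ hτ => (numUndominatedCols_init_le τ).trans hτ
  simp only [UC_eq_numUndominatedCols]
  rw [Pr_setOf_snd (fun τ => numUndominatedCols τ ≤ k),
    Pr_setOf_snd (fun σ => numUndominatedCols σ ≤ k), pow_succ, ← div_div, div_right_comm]
  gcongr ?_ / _
  rw [div_le_iff₀ (by positivity)]
  exact_mod_cast hcount

theorem not_colDomIn_of_apply_eq_top {m n : ℕ} [NeZero n] {τ : Fin m → Perm (Fin n)} {i : Fin m}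
    {j : Fin n} (h : τ i j = ⊤) : ¬ ColDomIn (permPayoff τ) univ univ j := by
  rintro ⟨j', -, hlt⟩
  refine (hlt i (mem_univ i)).not_ge ?_
  simp only [permPayoff, h, Nat.cast_le, Fin.val_fin_le]
  exact le_top

theorem colDomIn_of_forall_apply_eq_top {m n : ℕ} [NeZero n] {τ : Fin m → Perm (Fin n)}
    {j j' : Fin n} (hj : ∀ i, τ i j = ⊤) (hne : j' ≠ j) : ColDomIn (permPayoff τ) univ univ j' := by
  refine ⟨j, mem_univ j, fun i _ => ?_⟩
  have hlt : τ i j' < τ i j := (hj i ▸ le_top).lt_of_ne ((τ i).injective.ne hne)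
  simp only [permPayoff, Nat.cast_lt]
  exact hlt

open Classical in
theorem numUndominatedCols_le_one_iff {m n : ℕ} [NeZero n] (τ : Fin m → Perm (Fin n)) :
    numUndominatedCols τ ≤ 1 ↔ ∃ j, ∀ i, τ i j = ⊤ := by
  rw [numUndominatedCols, card_le_one_iff_subset_singleton]
  constructor
  · rintro ⟨j, hsub⟩
    refine ⟨j, fun i => ?_⟩
    have hundom : (τ i).symm ⊤ ∈ ({j} : Finset (Fin n)) :=
      hsub (mem_filter.2 ⟨mem_univ _, not_colDomIn_of_apply_eq_top (Equiv.apply_symm_apply _ _)⟩)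
    exact ((τ i).symm_apply_eq.1 (mem_singleton.1 hundom)).symm
  · rintro ⟨j, hj⟩
    refine ⟨j, fun j' hj' => mem_singleton.2 ?_⟩
    by_contra hne
    exact (mem_filter.1 hj').2 (colDomIn_of_forall_apply_eq_top hj hne)

theorem Pr_UC_le_one {m n : ℕ} [NeZero m] [NeZero n] :
    Pr {ω : Omega m n | UC ω ≤ 1} = 1 / (n : ℝ) ^ (m - 1) := by
  have hevent : {ω : Omega m n | UC ω ≤ 1} = {ω | ∃ j, ∀ i, ω.2 i j = ⊤} :=
    Set.ext fun ω => numUndominatedCols_le_one_iff ω.2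
  rw [hevent, Pr_setOf_snd (fun τ => ∃ j, ∀ i, τ i j = ⊤),
    card_filter_exists_forall_perm_apply_eq, Fintype.card_perm, Fintype.card_fin,
    Fintype.card_fin, ← Nat.mul_factorial_pred (NeZero.ne n)]
  obtain ⟨M, rfl⟩ : ∃ M, m = M + 1 := Nat.exists_eq_succ_of_ne_zero (NeZero.ne m)
  have hn : (n : ℝ) ≠ 0 := Nat.cast_ne_zero.2 (NeZero.ne n)
  have hfact : ((n - 1)! : ℝ) ≠ 0 := Nat.cast_ne_zero.2 (Nat.factorial_ne_zero _)
  push_cast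
  field_simp
  ring

/-- For all `m, n ≥ 2`, `U^C(m,n)` first-order stochastically dominates
`U^C(m−1,n)`: for every `k ∈ {1,…,n}`, `Pr(U^C(m,n) ≤ k) ≤ Pr(U^C(m−1,n) ≤ k)`, strictly
for `k = 1`, where `Pr(U^C(m,n) ≤ 1) = n^(−(m−1))`. -/
theorem stmt10 (m n : ℕ) (hm : 2 ≤ m) (hn : 2 ≤ n) :
    (∀ k ∈ Finset.Icc 1 n,
      Pr {ω : Omega m n | UC ω ≤ k} ≤ Pr {ω : Omega (m - 1) n | UC ω ≤ k}) ∧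
    Pr {ω : Omega m n | UC ω ≤ 1} < Pr {ω : Omega (m - 1) n | UC ω ≤ 1} ∧
    Pr {ω : Omega m n | UC ω ≤ 1} = 1 / (n : ℝ) ^ (m - 1) := by
  obtain ⟨M, rfl⟩ : ∃ M, m = M + 1 := ⟨m - 1, by omega⟩
  rw [Nat.add_sub_cancel]
  have : NeZero M := ⟨by omega⟩
  have : NeZero n := ⟨by omega⟩
  refine ⟨fun k _ => Pr_UC_le_succ_rows_le M n k, ?_, Pr_UC_le_one⟩
  rw [Pr_UC_le_one, Pr_UC_le_one]
  exact one_div_lt_one_div_of_lt (by positivity)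
    (pow_lt_pow_right₀ (by exact_mod_cast hn) (by omega))
end
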